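/- Consider quadratic costs: each arc a ∈ E has C_a(α) = c_a α² + d_a α with c_a ≥ 0, so C'_a(α) = 2c_a α + d_a. Let F ⊆ E be such that the arcs of F with c_a = 0 contain no undirected cycle, and let b : V → ℝ satisfy Σ_{i∈K} b_i = 0 for every connected component K of the undirected multigraph (V,F). Then there exist x : E → ℝ and π : V → ℝ with x_a = 0 for every a ∉ F, π_{head(a)} − π_{tail(a)} = 2c_a x_a + d_a for every a ∈ F, and ρ_x(i) = b_i for every i ∈ V. -/

import Mathlib

/-!
Finding `(x, π)` means solving `T (x, π) = (d, b)` for the operator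
`T (x, π) = (Δπ - 2 C x, ρ_x)` on `ℝ^(E ⊕ V)`, where `(Δπ)_a = π_{head a} - π_{tail a}`.
Since `∑ᵢ ρ_x(i) π_i = ∑ₐ x_a (Δπ)_a`, the operator `T` is symmetric, so `(d, b)` lies in its range
as soon as it is orthogonal to its kernel. If `T (x, π) = 0`, then `x` is a circulation and
`∑ₐ 2 c_a x_a² = ∑ₐ x_a (Δπ)_a = ∑ᵢ ρ_x(i) π_i = 0`, so `x` is carried by the arcs with `c_a = 0`.
These contain no cycle, and a circulation without a cycle in its support vanishes; hence `x = 0`,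
`π` is constant on connected components, and `⟪(d, b), (x, π)⟫ = ∑ᵢ b_i π_i = 0` because `b` sums
to zero on each component. Applying this to the subgraph with arc set `F` gives the theorem.
-/

open Finset
open scoped Classical

/-- Net inflow `ρ_x(i)` of a vector `x : E → ℝ` at a node `i` of a finite directed
multigraph given by `tail, head : E → V`. -/
noncomputable def netInflow {V E : Type*} [Fintype E] [DecidableEq V]
    (tail head : E → V) (x : E → ℝ) (i : V) : ℝ :=
  (∑ a ∈ Finset.univ.filter (fun a => head a = i), x a)
    - (∑ a ∈ Finset.univ.filter (fun a => tail a = i), x a)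

theorem Function.periodicPts_nonempty {α : Type*} [Finite α] [Nonempty α] (f : α → α) :
    (Function.periodicPts f).Nonempty := by
  obtain ⟨m, n, hne, heq⟩ := Finite.exists_ne_map_eq_of_infinite (f^[·] (Classical.arbitrary α))
  wlog hlt : m < n generalizing m n
  · exact this n m hne.symm heq.symm (hne.lt_or_gt.resolve_left hlt)
  refine ⟨f^[m] (Classical.arbitrary α), Function.mk_mem_periodicPts (Nat.sub_pos_of_lt hlt) ?_⟩
  rw [Function.IsPeriodicPt, Function.IsFixedPt, ← Function.iterate_add_apply,
    Nat.sub_add_cancel hlt.le, heq]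

/-- Choosing for each vertex `u` an arc of `S` leaving it gives a self-map `u ↦ tgt (arc u)`
of the vertices; the orbit of a periodic point of this map is the cycle. -/
theorem exists_cycle_of_forall_exists_next {α V : Type*} [Finite V] (src tgt : α → V)
    (S : Set α) (hS : S.Nonempty) (hnext : ∀ a ∈ S, ∃ a' ∈ S, src a' = tgt a) :
    ∃ k : ℕ, ∃ e : Fin (k + 1) → α, (∀ i, e i ∈ S) ∧ Function.Injective (src ∘ e) ∧
      ∀ i, tgt (e i) = src (e (i + 1)) := by
  let U := {u : V // ∃ a ∈ S, src a = u}
  choose arc harcS harc using fun u : U => u.2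
  let φ : U → U := fun u => ⟨tgt (arc u), hnext _ (harcS u)⟩
  obtain ⟨a0, ha0⟩ := hS
  have : Nonempty U := ⟨⟨src a0, a0, ha0, rfl⟩⟩
  obtain ⟨u, hu⟩ := Function.periodicPts_nonempty φ
  obtain ⟨k, hk⟩ : ∃ k, Function.minimalPeriod φ u = k + 1 :=
    Nat.exists_eq_succ_of_ne_zero (Function.minimalPeriod_pos_of_mem_periodicPts hu).ne'
  refine ⟨k, fun i => arc (φ^[i] u), fun i => harcS _, fun i j hij => ?_, fun i => ?_⟩
  · simp only [Function.comp_apply, harc] at hij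
    exact Fin.ext (Function.iterate_injOn_Iio_minimalPeriod (by rw [Set.mem_Iio, hk]; exact i.isLt)
      (by rw [Set.mem_Iio, hk]; exact j.isLt) (Subtype.ext hij))
  · have hper : Function.IsPeriodicPt φ (k + 1) u := hk ▸ Function.isPeriodicPt_minimalPeriod φ u
    have hval : ((i + 1 : Fin (k + 1)) : ℕ) = (i + 1) % (k + 1) := by simp [Fin.val_add]
    rw [harc, hval, hper.iterate_mod_apply, Function.iterate_succ_apply']

theorem LinearMap.IsSymmetric.range_eq_orthogonal_ker {𝕜 F : Type*} [RCLike 𝕜]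
    [NormedAddCommGroup F] [InnerProductSpace 𝕜 F] [FiniteDimensional 𝕜 F] {T : F →ₗ[𝕜] F}
    (hT : T.IsSymmetric) : LinearMap.range T = (LinearMap.ker T)ᗮ := by
  rw [← hT.orthogonal_range, Submodule.orthogonal_orthogonal]

theorem EuclideanSpace.inner_eq_sum_inl_add_sum_inr {α β : Type*} [Fintype α] [Fintype β]
    (z z' : EuclideanSpace ℝ (α ⊕ β)) :
    inner ℝ z z' = ∑ a, z (.inl a) * z' (.inl a) + ∑ b, z (.inr b) * z' (.inr b) := by
  simp [PiLp.inner_apply, Fintype.sum_sum_type, mul_comm]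

theorem sum_mul_eq_zero_of_sum_eq_zero_on_components {V : Type*} [Fintype V] {R : V → V → Prop}
    [Std.Symm R] {b μ : V → ℝ}
    (hb : ∀ v, ∑ i ∈ univ.filter (Relation.ReflTransGen R v), b i = 0)
    (hμ : ∀ u v, R u v → μ u = μ v) : ∑ i, b i * μ i = 0 := by
  let s : Setoid V := ⟨Relation.ReflTransGen R, ⟨fun _ => .refl, symm_of _, .trans⟩⟩
  refine sum_cancels_of_partition_cancels s fun v _ => ?_
  have hconst : ∀ i, Relation.ReflTransGen R v i → μ i = μ v := by
    intro i h
    induction h with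
    | refl => rfl
    | tail _ hR ih => exact (hμ _ _ hR).symm.trans ih
  calc ∑ i ∈ univ with s i v, b i * μ i
      = ∑ i ∈ univ.filter (Relation.ReflTransGen R v), b i * μ v := by
        refine sum_congr (filter_congr fun i _ => ⟨symm_of _, symm_of _⟩) fun i hi => ?_
        rw [hconst i (mem_filter.1 hi).2]
    _ = 0 := by rw [← sum_mul, hb, zero_mul]

section Graph

variable {V E : Type*} (tail head : E → V)

/-- The arc `e i` is traversed from its tail to its head iff `s i`. -/
def HasUndirectedCycle (P : E → Prop) : Prop :=
  ∃ k : ℕ, ∃ (e : Fin (k + 1) → E) (s : Fin (k + 1) → Bool),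
    (∀ i, P (e i)) ∧ Function.Injective e ∧
    Function.Injective (fun i => if s i then tail (e i) else head (e i)) ∧
    ∀ i : Fin (k + 1), (if s i then head (e i) else tail (e i)) =
      (if s (i + 1) then tail (e (i + 1)) else head (e (i + 1)))

def undirectedAdj (u w : V) : Prop :=
  ∃ a, (tail a = u ∧ head a = w) ∨ (tail a = w ∧ head a = u)

instance : Std.Symm (undirectedAdj tail head) := ⟨fun _ _ ⟨a, h⟩ => ⟨a, h.symm⟩⟩

variable {tail head} [Fintype E] [DecidableEq V]

theorem exists_outflow_of_inflow {x : E → ℝ} {v : V} (hv : netInflow tail head x v = 0)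
    (hin : (∃ a, head a = v ∧ 0 < x a) ∨ ∃ a, tail a = v ∧ x a < 0) :
    (∃ a, tail a = v ∧ 0 < x a) ∨ ∃ a, head a = v ∧ x a < 0 := by
  by_contra! hno
  obtain ⟨hout, hin'⟩ := hno
  have hin_nonneg : ∀ a ∈ univ.filter (fun a => head a = v), 0 ≤ x a :=
    fun a ha => hin' a (mem_filter.1 ha).2
  have hout_nonpos : ∀ a ∈ univ.filter (fun a => tail a = v), x a ≤ 0 :=
    fun a ha => hout a (mem_filter.1 ha).2
  have hin0 := sum_nonneg hin_nonneg
  have hout0 := sum_nonpos hout_nonpos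
  rw [netInflow] at hv
  rcases hin with ⟨a, ha, hxa⟩ | ⟨a, ha, hxa⟩
  · have := (sum_eq_zero_iff_of_nonneg hin_nonneg).1 (by linarith) a (by simpa using ha)
    linarith
  · have := (sum_eq_zero_iff_of_nonpos hout_nonpos).1 (by linarith) a (by simpa using ha)
    linarith

/-- Orient every arc of the support along its flow; by conservation each such arc can be
continued by another one, which closes up into a cycle. -/
theorem eq_zero_of_netInflow_eq_zero [Finite V] {P : E → Prop}
    (hacyc : ¬ HasUndirectedCycle tail head P) {x : E → ℝ} (hsupp : ∀ a, x a ≠ 0 → P a)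
    (hcirc : ∀ i, netInflow tail head x i = 0) : x = 0 := by
  by_contra hx
  obtain ⟨a0, ha0⟩ := Function.ne_iff.1 hx
  let src a := if 0 < x a then tail a else head a
  let tgt a := if 0 < x a then head a else tail a
  have hnext : ∀ a ∈ {a | x a ≠ 0}, ∃ a' ∈ {a | x a ≠ 0}, src a' = tgt a := by
    intro a ha
    have hin : (∃ a', head a' = tgt a ∧ 0 < x a') ∨ ∃ a', tail a' = tgt a ∧ x a' < 0 := by
      rcases (show x a ≠ 0 from ha).lt_or_gt with hneg | hpos
      · exact .inr ⟨a, by simp [tgt, hneg.not_gt], hneg⟩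
      · exact .inl ⟨a, by simp [tgt, hpos], hpos⟩
    rcases exists_outflow_of_inflow (hcirc _) hin with ⟨a', ha', hpos⟩ | ⟨a', ha', hneg⟩
    · exact ⟨a', hpos.ne', by simp [src, hpos, ha']⟩
    · exact ⟨a', hneg.ne, by simp [src, hneg.not_gt, ha']⟩
  obtain ⟨k, e, he, hinj, hadj⟩ :=
    exists_cycle_of_forall_exists_next src tgt _ ⟨a0, ha0⟩ hnext
  exact hacyc ⟨k, e, fun i => decide (0 < x (e i)), fun i => hsupp _ (he i), hinj.of_comp,
    by simpa [Function.comp_def] using hinj, by simpa using hadj⟩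

theorem sum_netInflow_mul [Fintype V] (x : E → ℝ) (π : V → ℝ) :
    ∑ i, netInflow tail head x i * π i = ∑ a, x a * (π (head a) - π (tail a)) := by
  have key : ∀ f : E → V,
      ∑ i, (∑ a ∈ univ.filter (fun a => f a = i), x a) * π i = ∑ a, x a * π (f a) := by
    intro f
    rw [← sum_fiberwise univ f (fun a => x a * π (f a))]
    refine sum_congr rfl fun i _ => ?_
    rw [sum_mul]
    exact sum_congr rfl fun a ha => by rw [(mem_filter.1 ha).2]
  simp only [netInflow, sub_mul, sum_sub_distrib, key, mul_sub]

theorem netInflow_extend_subtype (s : Finset E) (x : s → ℝ) (i : V) :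
    netInflow tail head (fun a => if h : a ∈ s then x ⟨a, h⟩ else 0) i =
      netInflow (fun a : s => tail a) (fun a : s => head a) x i := by
  have key : ∀ f : E → V,
      ∑ a ∈ univ.filter (fun a => f a = i), (if h : a ∈ s then x ⟨a, h⟩ else 0) =
        ∑ a ∈ univ.filter (fun a : s => f a = i), x a := by
    intro f
    simp only [sum_filter]
    refine (Fintype.sum_of_injective Subtype.val Subtype.val_injective _ _ (fun a ha => ?_)
      fun a => ?_).symm
    · simp [show a ∉ s from fun h => ha ⟨⟨a, h⟩, rfl⟩]
    · simp
  simp only [netInflow, key]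

end Graph

section SaddlePoint

variable {V E : Type*} [Fintype E] [DecidableEq V] {tail head : E → V} {c : E → ℝ}

variable (tail head) in
/-- `(x, π) ↦ (Δπ - 2 C x, ρ_x)`, with `x` in the `E`- and `π` in the `V`-coordinates. -/
noncomputable def saddlePointOperator (c : E → ℝ) :
    EuclideanSpace ℝ (E ⊕ V) →ₗ[ℝ] EuclideanSpace ℝ (E ⊕ V) where
  toFun z := WithLp.toLp 2 (Sum.elim
    (fun a => z (.inr (head a)) - z (.inr (tail a)) - 2 * c a * z (.inl a))
    (netInflow tail head (fun a => z (.inl a))))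
  map_add' z z' := by
    ext (a | i)
    · simp only [PiLp.add_apply, Sum.elim_inl]; ring
    · simp only [netInflow, PiLp.add_apply, Sum.elim_inr, sum_add_distrib]; ring
  map_smul' r z := by
    ext (a | i)
    · simp only [PiLp.smul_apply, Sum.elim_inl, smul_eq_mul, RingHom.id_apply]; ring
    · simp only [netInflow, PiLp.smul_apply, Sum.elim_inr, smul_eq_mul, RingHom.id_apply,
        mul_sum, mul_sub]

theorem saddlePointOperator_apply_inl (z : EuclideanSpace ℝ (E ⊕ V)) (a : E) :
    saddlePointOperator tail head c z (.inl a) =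
      z (.inr (head a)) - z (.inr (tail a)) - 2 * c a * z (.inl a) := rfl

theorem saddlePointOperator_apply_inr (z : EuclideanSpace ℝ (E ⊕ V)) (i : V) :
    saddlePointOperator tail head c z (.inr i) = netInflow tail head (fun a => z (.inl a)) i := rfl

variable [Fintype V]

theorem inner_saddlePointOperator (z z' : EuclideanSpace ℝ (E ⊕ V)) :
    inner ℝ (saddlePointOperator tail head c z) z' =
      ∑ a, ((z (.inr (head a)) - z (.inr (tail a))) * z' (.inl a)
        + z (.inl a) * (z' (.inr (head a)) - z' (.inr (tail a)))
        - 2 * c a * z (.inl a) * z' (.inl a)) := by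
  rw [EuclideanSpace.inner_eq_sum_inl_add_sum_inr]
  simp only [saddlePointOperator_apply_inl, saddlePointOperator_apply_inr, sum_netInflow_mul,
    ← sum_add_distrib]
  exact sum_congr rfl fun a _ => by ring

theorem isSymmetric_saddlePointOperator : (saddlePointOperator tail head c).IsSymmetric :=
  fun z z' => by
    rw [← real_inner_comm z, inner_saddlePointOperator, inner_saddlePointOperator]
    exact sum_congr rfl fun a _ => by ring

theorem saddlePointOperator_ker (hc : ∀ a, 0 ≤ c a)
    (hacyc : ¬ HasUndirectedCycle tail head (fun a => c a = 0))
    {z : EuclideanSpace ℝ (E ⊕ V)} (hz : saddlePointOperator tail head c z = 0) :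
    (∀ a, z (.inl a) = 0) ∧ ∀ a, z (.inr (head a)) = z (.inr (tail a)) := by
  set x : E → ℝ := fun a => z (.inl a)
  have hΔ : ∀ a, z (.inr (head a)) - z (.inr (tail a)) = 2 * c a * x a := fun a => by
    have := congrArg (· (.inl a)) hz
    simp only [saddlePointOperator_apply_inl, PiLp.zero_apply] at this
    linarith
  have hρ : ∀ i, netInflow tail head x i = 0 := fun i => congrArg (· (.inr i)) hz
  have hquad : ∑ a, c a * x a ^ 2 = 0 := by
    have := sum_netInflow_mul (tail := tail) (head := head) x (fun i => z (.inr i))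
    simp only [hρ, zero_mul, sum_const_zero, hΔ] at this
    calc ∑ a, c a * x a ^ 2 = 2⁻¹ * ∑ a, x a * (2 * c a * x a) := by
          rw [mul_sum]; exact sum_congr rfl fun a _ => by ring
      _ = 0 := by rw [← this, mul_zero]
  have hsupp : ∀ a, x a ≠ 0 → c a = 0 := fun a hxa => by
    have := (sum_eq_zero_iff_of_nonneg fun a _ => mul_nonneg (hc a) (sq_nonneg (x a))).1
      hquad a (mem_univ a)
    simpa [hxa] using this
  have hx := eq_zero_of_netInflow_eq_zero hacyc hsupp hρ
  refine ⟨fun a => congrFun hx a, fun a => ?_⟩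
  have := hΔ a
  simp only [hx, Pi.zero_apply, mul_zero] at this
  linarith

theorem exists_flow_potential_of_quadratic_costs (d : E → ℝ) (hc : ∀ a, 0 ≤ c a)
    (hacyc : ¬ HasUndirectedCycle tail head (fun a => c a = 0)) {b : V → ℝ}
    (hb : ∀ v, ∑ i ∈ univ.filter (Relation.ReflTransGen (undirectedAdj tail head) v), b i = 0) :
    ∃ (x : E → ℝ) (π : V → ℝ),
      (∀ a, π (head a) - π (tail a) = 2 * c a * x a + d a) ∧
        ∀ i, netInflow tail head x i = b i := by
  have hrange :
      WithLp.toLp 2 (Sum.elim d b) ∈ LinearMap.range (saddlePointOperator tail head c) := by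
    rw [isSymmetric_saddlePointOperator.range_eq_orthogonal_ker, Submodule.mem_orthogonal']
    intro z hz
    obtain ⟨hx, hπ⟩ := saddlePointOperator_ker hc hacyc (LinearMap.mem_ker.1 hz)
    rw [EuclideanSpace.inner_eq_sum_inl_add_sum_inr]
    simp only [Sum.elim_inl, Sum.elim_inr, hx, mul_zero, sum_const_zero, zero_add]
    refine sum_mul_eq_zero_of_sum_eq_zero_on_components hb fun u w ⟨a, h⟩ => ?_
    rcases h with ⟨rfl, rfl⟩ | ⟨rfl, rfl⟩
    exacts [(hπ a).symm, hπ a]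
  obtain ⟨z, hz⟩ := hrange
  refine ⟨fun a => z (.inl a), fun i => z (.inr i), fun a => ?_, fun i => ?_⟩
  · have := congrArg (· (.inl a)) hz
    simp only [saddlePointOperator_apply_inl, Sum.elim_inl] at this
    linarith
  · exact congrArg (· (.inr i)) hz

end SaddlePoint

/-- solvability of the Trial system for quadratic costs: let every arc
carry the cost `C_a(α) = c_a α² + d_a α` with `c_a ≥ 0`.  Suppose the arcs of `F` with
`c_a = 0` contain no undirected cycle, and `b` sums to `0` on every connected component
of the undirected multigraph `(V,F)` (the component of `v` being the set of nodes
reachable from `v` along arcs of `F` in either direction).  Then there are `x : E → ℝ`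
and potentials `π : V → ℝ` with `x = 0` outside `F`,
`π_{head a} − π_{tail a} = 2 c_a x_a + d_a` on `F`, and `ρ_x = b`. -/
theorem stmt_11 {V E : Type*} [Fintype V] [Fintype E] [DecidableEq V]
    (tail head : E → V) (c d : E → ℝ) (hc : ∀ a, 0 ≤ c a)
    (F : Finset E)
    (hacyc : ¬ ∃ k : ℕ, ∃ (e : Fin (k + 1) → E) (s : Fin (k + 1) → Bool),
      (∀ i, e i ∈ F ∧ c (e i) = 0) ∧
      Function.Injective e ∧
      Function.Injective (fun i => if s i then tail (e i) else head (e i)) ∧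
      ∀ i : Fin (k + 1), (if s i then head (e i) else tail (e i)) =
        (if s (i + 1) then tail (e (i + 1)) else head (e (i + 1))))
    (b : V → ℝ)
    (hb : ∀ v : V, ∑ i ∈ Finset.univ.filter (fun i =>
        Relation.ReflTransGen (fun u w => ∃ a ∈ F,
          (tail a = u ∧ head a = w) ∨ (tail a = w ∧ head a = u)) v i), b i = 0) :
    ∃ (x : E → ℝ) (π : V → ℝ),
      (∀ a, a ∉ F → x a = 0) ∧
      (∀ a ∈ F, π (head a) - π (tail a) = 2 * c a * x a + d a) ∧
      (∀ i, netInflow tail head x i = b i) := by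
  have hacycF : ¬ HasUndirectedCycle (fun a : F => tail a) (fun a : F => head a)
      (fun a => c a = 0) := fun ⟨k, e, s, he, hinj⟩ =>
    hacyc ⟨k, fun i => e i, s, fun i => ⟨(e i).2, he i⟩, Subtype.val_injective.comp hinj.1, hinj.2⟩
  have hadj : undirectedAdj (fun a : F => tail a) (fun a : F => head a) =
      fun u w => ∃ a ∈ F, (tail a = u ∧ head a = w) ∨ (tail a = w ∧ head a = u) := by
    ext u w
    simp [undirectedAdj]
  obtain ⟨x, π, hπ, hρ⟩ := exists_flow_potential_of_quadratic_costs (fun a : F => d a)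
    (fun a => hc a) hacycF (hadj ▸ hb)
  refine ⟨fun a => if h : a ∈ F then x ⟨a, h⟩ else 0, π, fun a ha => dif_neg ha,
    fun a ha => by simpa [ha] using hπ ⟨a, ha⟩, fun i => ?_⟩
  rw [netInflow_extend_subtype, hρ]
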